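/- Let Δt > 0, K a positive integer, 0 < γ ≤ Γ with γ/Δt and Γ/Δt positive integers such that Γ/Δt ≤ K, and η⁺, η⁻ ∈ (0,1]. Let 𝐱^b, 𝐱^r ∈ ℝ^K have nonnegative components, let 𝐝 ∈ ℝ^K, and fix y₀ ∈ ℝ and k ∈ {0,1,…,K}. Define m_l = max{ η⁺ x^r_l, (1/η⁻) x^r_l − (1/η⁻ − η⁺) x^b_l } for l ∈ {1,…,K}. Then the non-convex worst-case minimum admits the exact linear decision rule reformulation min_{𝛅 ∈ D_K} y_k(𝐱^b,𝐱^r,𝛅,y₀) = y₀ + min_{𝛅 ∈ D_K⁺} Δt Σ_{l=1}^{k} ( η⁺ x^b_l − m_l δ_l − d_l ), where both minima are attained. -/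

import Mathlib

/-!
For `|δ| ≤ 1`, the charging rate `η⁺[z]⁺ − (1/η⁻)[z]⁻` at `z = x^b + δ x^r` is a concave function
of `δ` that dominates `η⁺ x^b − m |δ|`, with equality at `δ ∈ {0, −1}`. Hence
`y_k(δ) ≥ LDR(|δ|)` with `|δ| ∈ D_K⁺`, and `y_k(−v) = LDR(v)` for every binary `v ∈ D_K⁺`, so it
suffices that the linear program `min_{D_K⁺} LDR`, which is attained on the compact polytope
`D_K⁺`, has a binary minimiser. Its constraints bound
sums over intervals of indices by integers, i.e. differences `S_b − S_a` of partial sums.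
Threshold rounding `v_n = ⌊S_{n+1} − θ⌋ − ⌊S_n − θ⌋` is binary, keeps every integer interval
budget, and averages to `u` over `θ ∈ (0, 1]`; so some threshold does not increase the linear
objective.
-/

open MeasureTheory Set

noncomputable section

/-- The continuous-time uncertainty set `D` of measurable frequency-deviation
scenarios `δ : [0,T] → [-1,1]` whose total absolute deviation over every
backward window of length `Γ` is at most `γ`. -/
def Dset (T Γ γ : ℝ) : Set (ℝ → ℝ) :=
  {δ | Measurable δ ∧ (∀ t ∈ Icc (0:ℝ) T, δ t ∈ Icc (-1:ℝ) 1) ∧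
    ∀ t ∈ Icc (0:ℝ) T, (∫ s in (max (t - Γ) 0)..t, |δ s|) ≤ γ}

/-- The nonnegative part `D⁺` of the continuous uncertainty set. -/
def DsetPlus (T Γ γ : ℝ) : Set (ℝ → ℝ) :=
  Dset T Γ γ ∩ {δ | ∀ t ∈ Icc (0:ℝ) T, δ t ∈ Icc (0:ℝ) 1}

/-- The discrete uncertainty set `D_K` (with `0`-based indexing): vectors in
`[-1,1]^K` whose sum of absolute values over each backward window of `W = Γ/Δt`
periods is at most `g = γ/Δt`. -/
def DK (K W g : ℕ) : Set (Fin K → ℝ) :=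
  {δ | (∀ l, |δ l| ≤ 1) ∧ ∀ k : Fin K,
    (∑ l ∈ Finset.univ.filter
      (fun l : Fin K => (k : ℕ) + 1 - W ≤ (l : ℕ) ∧ (l : ℕ) ≤ (k : ℕ)), |δ l|) ≤ (g : ℝ)}

/-- The nonnegative part `D_K⁺` of the discrete uncertainty set. -/
def DKplus (K W g : ℕ) : Set (Fin K → ℝ) :=
  DK K W g ∩ {δ | ∀ l, 0 ≤ δ l}

/-- The lifting operator `L` mapping a vector to the piecewise constant function
with value `v k` on `[kΔt, (k+1)Δt)` (0-based), and `v (K-1)` at `t = KΔt`. -/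
def lift (Δt : ℝ) {K : ℕ} (v : Fin K → ℝ) : ℝ → ℝ := fun t =>
  if h : min (⌊t / Δt⌋.toNat) (K - 1) < K then v ⟨min (⌊t / Δt⌋.toNat) (K - 1), h⟩ else 0

/-- The averaging operator `L†` mapping a function to its vector of averages
over the trading intervals. -/
def avg (Δt : ℝ) (K : ℕ) (w : ℝ → ℝ) : Fin K → ℝ := fun k =>
  (1 / Δt) * ∫ s in (((k : ℕ) : ℝ) * Δt)..((((k : ℕ) : ℝ) + 1) * Δt), w s

/-- The integrand of the continuous-time state-of-charge. -/
def socIntegrand (ηp ηm : ℝ) (xb xr δ d : ℝ → ℝ) (s : ℝ) : ℝ :=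
  ηp * max (xb s + δ s * xr s) 0 - (1 / ηm) * max (-(xb s + δ s * xr s)) 0 - d s

/-- The continuous-time state-of-charge `y(x^b, x^r, δ, y₀, t)`. -/
def soc (ηp ηm : ℝ) (xb xr δ d : ℝ → ℝ) (y0 t : ℝ) : ℝ :=
  y0 + ∫ s in (0:ℝ)..t, socIntegrand ηp ηm xb xr δ d s

/-- The discrete-time state-of-charge `y_k(𝐱^b, 𝐱^r, 𝛅, y₀)` (0-based indexing:
the sum extends over the first `k` components). -/
def ysoc (Δt ηp ηm : ℝ) {K : ℕ} (xb xr δ d : Fin K → ℝ) (y0 : ℝ) (k : ℕ) : ℝ :=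
  y0 + Δt * ∑ l ∈ Finset.univ.filter (fun l : Fin K => (l : ℕ) < k),
    (ηp * max (xb l + δ l * xr l) 0 - (1 / ηm) * max (-(xb l + δ l * xr l)) 0 - d l)

open Finset

def thresholdRound (u : ℕ → ℝ) (θ : ℝ) (n : ℕ) : ℝ :=
  ⌊∑ i ∈ range (n + 1), u i - θ⌋ - ⌊∑ i ∈ range n, u i - θ⌋

section ThresholdRounding

variable {u : ℕ → ℝ}

theorem thresholdRound_eq_zero_or_one (θ : ℝ) {n : ℕ} (hu0 : 0 ≤ u n) (hu1 : u n ≤ 1) :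
    thresholdRound u θ n = 0 ∨ thresholdRound u θ n = 1 := by
  set x := ∑ i ∈ range n, u i - θ
  have hsucc : ∑ i ∈ range (n + 1), u i - θ = x + u n := by rw [sum_range_succ]; ring
  have hlo : ⌊x⌋ ≤ ⌊x + u n⌋ := Int.floor_le_floor (by linarith)
  have hhi : ⌊x + u n⌋ ≤ ⌊x⌋ + 1 := by
    rw [← Int.floor_add_one]; exact Int.floor_le_floor (by linarith)
  rw [thresholdRound, hsucc]
  obtain h | h : ⌊x + u n⌋ = ⌊x⌋ ∨ ⌊x + u n⌋ = ⌊x⌋ + 1 := by omega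
  · left; rw [h, sub_self]
  · right; rw [h]; push_cast; ring

theorem sum_Ico_thresholdRound (θ : ℝ) {a b : ℕ} (hab : a ≤ b) :
    ∑ n ∈ Ico a b, thresholdRound u θ n =
      ⌊∑ i ∈ range b, u i - θ⌋ - ⌊∑ i ∈ range a, u i - θ⌋ := by
  simp only [thresholdRound]
  rw [sum_Ico_eq_sub _ hab, sum_range_sub (fun n => (⌊∑ i ∈ range n, u i - θ⌋ : ℝ)),
    sum_range_sub (fun n => (⌊∑ i ∈ range n, u i - θ⌋ : ℝ))]
  ring

theorem sum_Ico_thresholdRound_le (θ : ℝ) {a b G : ℕ} (h : ∑ n ∈ Ico a b, u n ≤ G) :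
    ∑ n ∈ Ico a b, thresholdRound u θ n ≤ G := by
  rcases le_or_gt a b with hab | hba
  · rw [sum_Ico_eq_sub _ hab] at h
    have : ⌊∑ i ∈ range b, u i - θ⌋ ≤ ⌊∑ i ∈ range a, u i - θ⌋ + G := by
      rw [← Int.floor_add_natCast]; exact Int.floor_le_floor (by linarith)
    rw [sum_Ico_thresholdRound θ hab]
    exact_mod_cast sub_le_iff_le_add'.mpr this
  · simp [Finset.Ico_eq_empty_of_le hba.le]

theorem intervalIntegral_eq_of_forall_Ioc {f : ℝ → ℝ} {a b c : ℝ} (hab : a ≤ b)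
    (h : ∀ θ ∈ Ioc a b, f θ = c) : ∫ θ in a..b, f θ = (b - a) * c := by
  rw [intervalIntegral.integral_of_le hab, setIntegral_congr_fun measurableSet_Ioc h,
    setIntegral_const, measureReal_def, Real.volume_Ioc, ENNReal.toReal_ofReal (by linarith),
    smul_eq_mul]

theorem intervalIntegrable_floor_sub (x a b : ℝ) :
    IntervalIntegrable (fun θ : ℝ => (⌊x - θ⌋ : ℝ)) volume a b :=
  Antitone.intervalIntegrable fun _ _ h => by
    exact_mod_cast Int.floor_le_floor (sub_le_sub_left h x)

-- on `(0, fract x]` the floor is `⌊x⌋`, on `(fract x, 1]` it is `⌊x⌋ - 1`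
theorem integral_floor_sub (x : ℝ) : ∫ θ in (0:ℝ)..1, (⌊x - θ⌋ : ℝ) = x - 1 := by
  have hr0 := Int.fract_nonneg x
  have hr1 := Int.fract_lt_one x
  have hx := Int.floor_add_fract x
  rw [← intervalIntegral.integral_add_adjacent_intervals (b := Int.fract x)
      (intervalIntegrable_floor_sub x _ _) (intervalIntegrable_floor_sub x _ _),
    intervalIntegral_eq_of_forall_Ioc hr0 (c := ⌊x⌋),
    intervalIntegral_eq_of_forall_Ioc hr1.le (c := ⌊x⌋ - 1)]
  · linear_combination hx
  · rintro θ ⟨h1, h2⟩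
    have : ⌊x - θ⌋ = ⌊x⌋ - 1 := by rw [Int.floor_eq_iff]; push_cast; constructor <;> linarith
    simp [this]
  · rintro θ ⟨h1, h2⟩
    have : ⌊x - θ⌋ = ⌊x⌋ := by rw [Int.floor_eq_iff]; constructor <;> linarith
    simp [this]

theorem intervalIntegrable_thresholdRound (n : ℕ) :
    IntervalIntegrable (fun θ => thresholdRound u θ n) volume 0 1 :=
  (intervalIntegrable_floor_sub _ _ _).sub (intervalIntegrable_floor_sub _ _ _)

theorem integral_thresholdRound (n : ℕ) : ∫ θ in (0:ℝ)..1, thresholdRound u θ n = u n := by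
  simp only [thresholdRound]
  rw [intervalIntegral.integral_sub (intervalIntegrable_floor_sub _ _ _)
    (intervalIntegrable_floor_sub _ _ _), integral_floor_sub, integral_floor_sub, sum_range_succ]
  ring

theorem exists_sum_mul_le_sum_mul_thresholdRound (s : Finset ℕ) (c : ℕ → ℝ) :
    ∃ θ, ∑ n ∈ s, c n * u n ≤ ∑ n ∈ s, c n * thresholdRound u θ n := by
  have hint : ∀ n ∈ s, IntervalIntegrable (fun θ => c n * thresholdRound u θ n) volume 0 1 :=
    fun n _ => (intervalIntegrable_thresholdRound n).const_mul (c n)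
  have havg : ⨍ θ in Ioc (0:ℝ) 1, ∑ n ∈ s, c n * thresholdRound u θ n = ∑ n ∈ s, c n * u n := by
    rw [setAverage_eq, ← intervalIntegral.integral_of_le zero_le_one,
      intervalIntegral.integral_finsetSum hint]
    simp [intervalIntegral.integral_const_mul, integral_thresholdRound]
  obtain ⟨θ, -, hθ⟩ := exists_setAverage_le (by simp) (by simp)
    ((intervalIntegrable_iff_integrableOn_Ioc_of_le zero_le_one).mp
      (IntervalIntegrable.sum s hint))
  simp only [Finset.sum_apply] at hθ
  exact ⟨θ, havg ▸ hθ⟩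

end ThresholdRounding

def extendByZero {K : ℕ} (u : Fin K → ℝ) (n : ℕ) : ℝ := if h : n < K then u ⟨n, h⟩ else 0

@[simp]
theorem extendByZero_val {K : ℕ} (u : Fin K → ℝ) (l : Fin K) : extendByZero u l = u l := by
  simp [extendByZero]

theorem map_valEmbedding_filter_window {K : ℕ} (a : ℕ) (k : Fin K) :
    (univ.filter fun l : Fin K => a ≤ (l : ℕ) ∧ (l : ℕ) ≤ k).map Fin.valEmbedding =
      Finset.Ico a (k + 1) := by
  ext n
  simp only [Finset.mem_map, Finset.mem_filter, Finset.mem_univ, true_and,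
    Fin.valEmbedding_apply, Finset.mem_Ico]
  constructor
  · rintro ⟨l, hl, rfl⟩; omega
  · intro hn; exact ⟨⟨n, by omega⟩, by simp only; omega, rfl⟩

theorem sum_window_eq_sum_Ico {K : ℕ} (f : ℕ → ℝ) (a : ℕ) (k : Fin K) :
    ∑ l ∈ univ.filter (fun l : Fin K => a ≤ (l : ℕ) ∧ (l : ℕ) ≤ k), f l =
      ∑ n ∈ Finset.Ico a (k + 1), f n := by
  rw [← map_valEmbedding_filter_window, sum_map]
  rfl

section UncertaintySet

variable {K W g : ℕ}

theorem neg_mem_DK {δ : Fin K → ℝ} (hδ : δ ∈ DK K W g) : -δ ∈ DK K W g := by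
  simpa [DK] using hδ

theorem abs_mem_DKplus {δ : Fin K → ℝ} (hδ : δ ∈ DK K W g) :
    (fun l => |δ l|) ∈ DKplus K W g := by
  simpa [DKplus, DK] using hδ

theorem zero_mem_DKplus : (0 : Fin K → ℝ) ∈ DKplus K W g := by
  simp [DKplus, DK]

theorem isCompact_DKplus : IsCompact (DKplus K W g) := by
  refine (isCompact_Icc (a := (0 : Fin K → ℝ)) (b := 1)).of_isClosed_subset ?_ ?_
  · have hDK : IsClosed (DK K W g) := by
      simp only [DK, ofPred_and, ofPred_forall]
      exact (isClosed_iInter fun l => isClosed_le (by fun_prop) continuous_const).inter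
        (isClosed_iInter fun k => isClosed_le (by fun_prop) continuous_const)
    simp only [DKplus, ofPred_forall]
    exact hDK.inter (isClosed_iInter fun l => isClosed_le continuous_const (by fun_prop))
  · rintro δ ⟨⟨hδ1, -⟩, hδ0⟩
    exact ⟨hδ0, fun l => (le_abs_self _).trans (hδ1 l)⟩

theorem mem_DKplus_of_binary {v : Fin K → ℝ} (hv : ∀ l, v l = 0 ∨ v l = 1)
    (hwin : ∀ k : Fin K, ∑ l ∈ univ.filter
      (fun l : Fin K => (k : ℕ) + 1 - W ≤ (l : ℕ) ∧ (l : ℕ) ≤ k), v l ≤ g) :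
    v ∈ DKplus K W g := by
  have habs : ∀ l, |v l| = v l := fun l => by rcases hv l with h | h <;> simp [h]
  refine ⟨⟨fun l => ?_, fun k => ?_⟩, fun l => ?_⟩
  · rcases hv l with h | h <;> simp [h]
  · simpa only [habs] using hwin k
  · rcases hv l with h | h <;> simp [h]

theorem exists_binary_mem_DKplus_sum_mul_le (s : Finset (Fin K)) (c : Fin K → ℝ)
    {u : Fin K → ℝ} (hu : u ∈ DKplus K W g) :
    ∃ v ∈ DKplus K W g, (∀ l, v l = 0 ∨ v l = 1) ∧
      ∑ l ∈ s, c l * u l ≤ ∑ l ∈ s, c l * v l := by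
  obtain ⟨⟨hu1, huwin⟩, hu0⟩ := hu
  have hũ : ∀ n, 0 ≤ extendByZero u n ∧ extendByZero u n ≤ 1 := fun n => by
    unfold extendByZero
    split_ifs
    · exact ⟨hu0 _, (le_abs_self _).trans (hu1 _)⟩
    · simp
  obtain ⟨θ, hθ⟩ := exists_sum_mul_le_sum_mul_thresholdRound (u := extendByZero u)
    (s.map Fin.valEmbedding) (extendByZero c)
  set w := thresholdRound (extendByZero u) θ
  have hw : ∀ l : Fin K, w l = 0 ∨ w l = 1 :=
    fun l => thresholdRound_eq_zero_or_one θ (hũ l).1 (hũ l).2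
  refine ⟨fun l => w l, mem_DKplus_of_binary hw fun k => ?_, hw, ?_⟩
  · rw [sum_window_eq_sum_Ico w]
    apply sum_Ico_thresholdRound_le
    rw [← sum_window_eq_sum_Ico]
    simpa only [extendByZero_val, abs_of_nonneg (hu0 _)] using huwin k
  · simpa only [sum_map, Fin.valEmbedding_apply, extendByZero_val] using hθ

end UncertaintySet

def ldrSlope (a b xb xr : ℝ) : ℝ := max (a * xr) (b * xr - (b - a) * xb)

section Pointwise

variable {a b xb xr : ℝ}

theorem sub_ldrSlope_mul_abs_le {δ : ℝ} (ha : 0 ≤ a) (hab : a ≤ b) (hxb : 0 ≤ xb)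
    (hxr : 0 ≤ xr) (hδ : |δ| ≤ 1) :
    a * xb - ldrSlope a b xb xr * |δ| ≤
      a * max (xb + δ * xr) 0 - b * max (-(xb + δ * xr)) 0 := by
  have hm₁ : a * xr ≤ ldrSlope a b xb xr := le_max_left _ _
  have hm₂ : b * xr - (b - a) * xb ≤ ldrSlope a b xb xr := le_max_right _ _
  obtain ⟨hδ₁, hδ₂⟩ := abs_le.mp hδ
  rcases le_total 0 δ with hδ0 | hδ0
  · rw [abs_of_nonneg hδ0, max_eq_left (by positivity), max_eq_right (by nlinarith)]
    nlinarith [mul_le_mul_of_nonneg_right hm₁ hδ0, mul_nonneg (mul_nonneg ha hxr) hδ0]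
  · rw [abs_of_nonpos hδ0]
    rcases le_total 0 (xb + δ * xr) with hz | hz
    · rw [max_eq_left hz, max_eq_right (by linarith)]
      nlinarith [mul_le_mul_of_nonpos_right hm₁ hδ0]
    · rw [max_eq_right hz, max_eq_left (by linarith)]
      nlinarith [mul_le_mul_of_nonpos_right hm₂ hδ0,
        mul_nonneg (mul_nonneg (sub_nonneg.mpr hab) hxb) (neg_le_iff_add_nonneg.mp hδ₁)]

theorem charge_neg_eq_sub_ldrSlope_mul {v : ℝ} (hab : a ≤ b) (hxb : 0 ≤ xb) (hv : v = 0 ∨ v = 1) :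
    a * max (xb + -v * xr) 0 - b * max (-(xb + -v * xr)) 0 = a * xb - ldrSlope a b xb xr * v := by
  rcases hv with rfl | rfl
  · simp [hxb]
  · rcases le_total xr xb with h | h
    · rw [max_eq_left (by linarith), max_eq_right (by linarith), ldrSlope,
        max_eq_left (by nlinarith)]
      ring
    · rw [max_eq_right (by linarith), max_eq_left (by linarith), ldrSlope,
        max_eq_right (by nlinarith)]
      ring

end Pointwise

def ldrValue (Δt a b : ℝ) {K : ℕ} (xb xr δ d : Fin K → ℝ) (y0 : ℝ) (k : ℕ) : ℝ :=
  y0 + Δt * ∑ l ∈ univ.filter (fun l : Fin K => (l : ℕ) < k),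
    (a * xb l - ldrSlope a b (xb l) (xr l) * δ l - d l)

theorem continuous_ldrValue (Δt a b : ℝ) {K : ℕ} (xb xr d : Fin K → ℝ) (y0 : ℝ) (k : ℕ) :
    Continuous fun δ => ldrValue Δt a b xb xr δ d y0 k := by
  unfold ldrValue
  fun_prop

section StateOfCharge

variable {Δt ηp ηm : ℝ} {K : ℕ} {xb xr d : Fin K → ℝ} {y0 : ℝ} {k : ℕ}

theorem ldrValue_le_ldrValue {a b : ℝ} {u v : Fin K → ℝ} (hΔt : 0 ≤ Δt)
    (h : ∑ l ∈ univ.filter (fun l : Fin K => (l : ℕ) < k), ldrSlope a b (xb l) (xr l) * u l ≤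
      ∑ l ∈ univ.filter (fun l : Fin K => (l : ℕ) < k), ldrSlope a b (xb l) (xr l) * v l) :
    ldrValue Δt a b xb xr v d y0 k ≤ ldrValue Δt a b xb xr u d y0 k := by
  simp only [ldrValue, sum_sub_distrib] at h ⊢
  gcongr

theorem ldrValue_abs_le_ysoc {δ : Fin K → ℝ} (hΔt : 0 ≤ Δt) (hηp : 0 ≤ ηp) (hη : ηp ≤ 1 / ηm)
    (hxb : ∀ l, 0 ≤ xb l) (hxr : ∀ l, 0 ≤ xr l) (hδ : ∀ l, |δ l| ≤ 1) :
    ldrValue Δt ηp (1 / ηm) xb xr (fun l => |δ l|) d y0 k ≤ ysoc Δt ηp ηm xb xr δ d y0 k := by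
  unfold ldrValue ysoc
  gcongr y0 + Δt * ?_
  exact sum_le_sum fun l _ =>
    sub_le_sub_right (sub_ldrSlope_mul_abs_le hηp hη (hxb l) (hxr l) (hδ l)) _

theorem ysoc_neg_eq_ldrValue {v : Fin K → ℝ} (hη : ηp ≤ 1 / ηm) (hxb : ∀ l, 0 ≤ xb l)
    (hv : ∀ l, v l = 0 ∨ v l = 1) :
    ysoc Δt ηp ηm xb xr (-v) d y0 k = ldrValue Δt ηp (1 / ηm) xb xr v d y0 k := by
  unfold ldrValue ysoc
  congr 2
  refine sum_congr rfl fun l _ => ?_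
  rw [Pi.neg_apply, charge_neg_eq_sub_ldrSlope_mul hη (hxb l) (hv l)]

end StateOfCharge

theorem stmt_16_general (Δt ηp ηm : ℝ) (K W g : ℕ) (hΔt : 0 < Δt)
    (hηp : ηp ∈ Ioc (0:ℝ) 1) (hηm : ηm ∈ Ioc (0:ℝ) 1)
    (xb xr d : Fin K → ℝ) (hxb : ∀ l, 0 ≤ xb l) (hxr : ∀ l, 0 ≤ xr l)
    (y0 : ℝ) (k : ℕ) :
    ∃ M : ℝ,
      IsLeast {v : ℝ | ∃ δ ∈ DK K W g, v = ysoc Δt ηp ηm xb xr δ d y0 k} M ∧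
      IsLeast {v : ℝ | ∃ δ ∈ DKplus K W g,
        v = y0 + Δt * ∑ l ∈ Finset.univ.filter (fun l : Fin K => (l : ℕ) < k),
          (ηp * xb l -
            max (ηp * xr l) ((1 / ηm) * xr l - (1 / ηm - ηp) * xb l) * δ l - d l)} M := by
  have hη : ηp ≤ 1 / ηm := hηp.2.trans (one_le_one_div hηm.1 hηm.2)
  set V := fun δ => ldrValue Δt ηp (1 / ηm) xb xr δ d y0 k
  obtain ⟨u, hu, hu_min⟩ := isCompact_DKplus.exists_isMinOn ⟨0, zero_mem_DKplus⟩
    (continuous_ldrValue Δt ηp (1 / ηm) xb xr d y0 k).continuousOn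
  obtain ⟨v, hv, hv_bin, hvu⟩ := exists_binary_mem_DKplus_sum_mul_le
    (univ.filter fun l : Fin K => (l : ℕ) < k) (fun l => ldrSlope ηp (1 / ηm) (xb l) (xr l)) hu
  have hv_min : ∀ w ∈ DKplus K W g, V v ≤ V w :=
    fun w hw => (ldrValue_le_ldrValue hΔt.le hvu).trans (hu_min hw)
  refine ⟨V v, ⟨⟨-v, neg_mem_DK hv.1, (ysoc_neg_eq_ldrValue hη hxb hv_bin).symm⟩, ?_⟩,
    ⟨v, hv, rfl⟩, ?_⟩
  · rintro _ ⟨δ, hδ, rfl⟩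
    exact (hv_min _ (abs_mem_DKplus hδ)).trans
      (ldrValue_abs_le_ysoc hΔt.le hηp.1.le hη hxb hxr hδ.1)
  · rintro _ ⟨w, hw, rfl⟩
    exact hv_min w hw

/-- exact linear decision rule reformulation: the worst-case
minimum of the discrete state-of-charge over `D_K` is attained and equals `y₀`
plus the minimum over `D_K⁺` of the linear-decision-rule expression built from
`m_l = max{η⁺x^r_l, (1/η⁻)x^r_l − Δη x^b_l}`. -/
theorem stmt_16 (Δt ηp ηm : ℝ) (K W g : ℕ) (hΔt : 0 < Δt)
    (hg : 0 < g) (hgW : g ≤ W) (hWK : W ≤ K)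
    (hηp : ηp ∈ Ioc (0:ℝ) 1) (hηm : ηm ∈ Ioc (0:ℝ) 1)
    (xb xr d : Fin K → ℝ) (hxb : ∀ l, 0 ≤ xb l) (hxr : ∀ l, 0 ≤ xr l)
    (y0 : ℝ) (k : ℕ) (hk : k ≤ K) :
    ∃ M : ℝ,
      IsLeast {v : ℝ | ∃ δ ∈ DK K W g, v = ysoc Δt ηp ηm xb xr δ d y0 k} M ∧
      IsLeast {v : ℝ | ∃ δ ∈ DKplus K W g,
        v = y0 + Δt * ∑ l ∈ Finset.univ.filter (fun l : Fin K => (l : ℕ) < k),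
          (ηp * xb l -
            max (ηp * xr l) ((1 / ηm) * xr l - (1 / ηm - ηp) * xb l) * δ l - d l)} M :=
  stmt_16_general Δt ηp ηm K W g hΔt hηp hηm xb xr d hxb hxr y0 k
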